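/- Let P₁, …, P_n be sample polygons and let p = (p₁, …, p_n) be a point of the scheme of polygons 𝔼^𝐏/𝔼. On the tangent space T_p(𝔼^𝐏/𝔼) — the space of tuples t = (t₁, …, t_n), t_i : F_i → ℝ³ with ⟨p_i(f), t_i(f)⟩ = 0 for all f ∈ F_i and Σ_{f ∈ F_i} t_i(f) = 0 — define the skew-symmetric bilinear form ω_p(t, t') = Σ_{i=1}^n Σ_{j=1}^{k_i} det( t_i(f^i_j), t'_i(f^i_j), p_i(f^i_j) ) / ℓ_i(f^i_j)². Then the kernel of ω_p (the set of t ∈ T_p with ω_p(t, t') = 0 for all t' ∈ T_p) coincides exactly with the tangent space to the SO(3)ⁿ-orbit of p, namely { (a₁ ∘ p₁, …, a_n ∘ p_n) : a_i ∈ 𝔰𝔬₃ }, where 𝔰𝔬₃ is the space of skew-symmetric linear maps of ℝ³. -/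

import Mathlib

/-
The symplectic form on the scheme of polygons.  For a point `p` of the scheme
of polygons (a tuple of closed polygons in `ℝ³` with prescribed edge lengths)
and tangent vectors `t, t'` at `p`, set
`ω_p(t, t') = ∑ᵢ ∑ⱼ det(tᵢ(fⱼ), t'ᵢ(fⱼ), pᵢ(fⱼ)) / ℓᵢ(fⱼ)²`.
Its kernel is the tangent space to the `SO(3)ⁿ`-orbit of `p`.
-/

noncomputable section

/-- Euclidean 3-space. -/
abbrev E3 : Type := EuclideanSpace ℝ (Fin 3)

/-- The determinant of the 3×3 matrix with columns `x, y, z ∈ ℝ³` (the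
standard volume form evaluated at `(x, y, z)`). -/
def det3 (x y z : E3) : ℝ :=
  Matrix.det !![x 0, y 0, z 0; x 1, y 1, z 1; x 2, y 2, z 2]

/-- The Lie algebra `𝔰𝔬₃`: skew-symmetric linear maps of `ℝ³`. -/
def so3 : Set (E3 →ₗ[ℝ] E3) :=
  {a | ∀ x y : E3, (inner ℝ (a x) y : ℝ) + (inner ℝ x (a y) : ℝ) = 0}

/-! ### Auxiliary material: the cross product on `E3` -/

/-- The cross product on `E3`. -/
def cross (x y : E3) : E3 :=
  WithLp.toLp 2 ![x 1 * y 2 - x 2 * y 1, x 2 * y 0 - x 0 * y 2, x 0 * y 1 - x 1 * y 0]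

lemma inner3 (x y : E3) : (inner ℝ x y : ℝ) = x 0 * y 0 + x 1 * y 1 + x 2 * y 2 := by
  simp [PiLp.inner_apply, RCLike.inner_apply, Fin.sum_univ_three, mul_comm]

lemma det3_eq (x y z : E3) : det3 x y z =
    x 0 * (y 1 * z 2 - y 2 * z 1) - y 0 * (x 1 * z 2 - x 2 * z 1) + z 0 * (x 1 * y 2 - x 2 * y 1) := by
  simp [det3, Matrix.det_fin_three]; ring

lemma ext3 (x y : E3) (h0 : x 0 = y 0) (h1 : x 1 = y 1) (h2 : x 2 = y 2) : x = y :=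
  PiLp.ext fun c => by fin_cases c <;> assumption

lemma cross0 (x y : E3) : cross x y 0 = x 1 * y 2 - x 2 * y 1 := rfl
lemma cross1 (x y : E3) : cross x y 1 = x 2 * y 0 - x 0 * y 2 := rfl
lemma cross2 (x y : E3) : cross x y 2 = x 0 * y 1 - x 1 * y 0 := rfl

lemma add_apply' (x y : E3) (c : Fin 3) : (x + y) c = x c + y c := rfl
lemma smul_apply' (r : ℝ) (x : E3) (c : Fin 3) : (r • x) c = r * x c := rfl
lemma sub_apply' (x y : E3) (c : Fin 3) : (x - y) c = x c - y c := rfl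

lemma cross_smul_left (r : ℝ) (x y : E3) : cross (r • x) y = r • cross x y := by
  refine ext3 _ _ ?_ ?_ ?_ <;>
    simp only [cross0, cross1, cross2, smul_apply'] <;> ring

lemma cross_add_smul_left (c x : E3) (r : ℝ) : cross (c + r • x) x = cross c x := by
  refine ext3 _ _ ?_ ?_ ?_ <;>
    simp only [cross0, cross1, cross2, smul_apply', add_apply'] <;> ring

lemma cross_cross_self (a b : E3) :
    cross (cross a b) a = (inner ℝ a a : ℝ) • b - (inner ℝ b a : ℝ) • a := by
  refine ext3 _ _ ?_ ?_ ?_ <;>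
    simp only [cross0, cross1, cross2, smul_apply', sub_apply', inner3] <;> ring

lemma det3_eq_inner_cross (x y z : E3) : det3 x y z = (inner ℝ (cross z x) y : ℝ) := by
  simp only [det3_eq, inner3, cross0, cross1, cross2]; ring

lemma det3_zero₂ (x z : E3) : det3 x 0 z = 0 := by
  have h : ∀ c : Fin 3, (0 : E3) c = 0 := fun _ => rfl
  simp [det3_eq, h]

lemma det3_cross_left (v x y : E3) :
    det3 (cross v x) y x
      = (inner ℝ x x : ℝ) * (inner ℝ v y : ℝ) - (inner ℝ v x : ℝ) * (inner ℝ x y : ℝ) := by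
  simp only [det3_eq, inner3, cross0, cross1, cross2]; ring

/-- The linear map `x ↦ v × x`. -/
def crossLin (v : E3) : E3 →ₗ[ℝ] E3 where
  toFun x := cross v x
  map_add' x y := by
    refine ext3 _ _ ?_ ?_ ?_ <;>
      simp only [cross0, cross1, cross2, add_apply'] <;> ring
  map_smul' r x := by
    refine ext3 _ _ ?_ ?_ ?_ <;>
      simp only [cross0, cross1, cross2, smul_apply', RingHom.id_apply] <;> ring

lemma crossLin_mem_so3 (v : E3) : crossLin v ∈ so3 := by
  intro x y
  show (inner ℝ (cross v x) y : ℝ) + (inner ℝ x (cross v y) : ℝ) = 0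
  simp only [inner3, cross0, cross1, cross2]; ring

/-! ### Every element of `𝔰𝔬₃` is a cross product -/

def b0 : E3 := WithLp.toLp 2 ![1, 0, 0]
def b1 : E3 := WithLp.toLp 2 ![0, 1, 0]
def b2 : E3 := WithLp.toLp 2 ![0, 0, 1]

lemma b0c : b0 0 = 1 ∧ b0 1 = 0 ∧ b0 2 = 0 := ⟨rfl, rfl, rfl⟩
lemma b1c : b1 0 = 0 ∧ b1 1 = 1 ∧ b1 2 = 0 := ⟨rfl, rfl, rfl⟩
lemma b2c : b2 0 = 0 ∧ b2 1 = 0 ∧ b2 2 = 1 := ⟨rfl, rfl, rfl⟩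

lemma decomp (x : E3) : x = x 0 • b0 + x 1 • b1 + x 2 • b2 := by
  refine ext3 _ _ ?_ ?_ ?_ <;>
    simp only [add_apply', smul_apply'] <;>
    · show _ = _
      norm_num [b0c, b1c, b2c]

lemma so3_exists_cross {a : E3 →ₗ[ℝ] E3} (ha : a ∈ so3) : ∃ v : E3, ∀ x, a x = cross v x := by
  have key : ∀ (u w : E3), (inner ℝ (a u) w : ℝ) + (inner ℝ (a w) u : ℝ) = 0 := by
    intro u w
    have h1 := ha u w
    have h2 : (inner ℝ u (a w) : ℝ) = (inner ℝ (a w) u : ℝ) := real_inner_comm (a w) u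
    linarith
  set v : E3 := WithLp.toLp 2 ![(a b1) 2, (a b2) 0, (a b0) 1] with hv
  refine ⟨v, fun x => ?_⟩
  have hx : a x = x 0 • a b0 + x 1 • a b1 + x 2 • a b2 := by
    conv_lhs => rw [decomp x]
    simp [map_add, map_smul]
  have h00 : (a b0) 0 = 0 := by
    have := key b0 b0; simp only [inner3] at this
    simp only [b0c.1, b0c.2.1, b0c.2.2] at this; linarith
  have h11 : (a b1) 1 = 0 := by
    have := key b1 b1; simp only [inner3] at this
    simp only [b1c.1, b1c.2.1, b1c.2.2] at this; linarith
  have h22 : (a b2) 2 = 0 := by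
    have := key b2 b2; simp only [inner3] at this
    simp only [b2c.1, b2c.2.1, b2c.2.2] at this; linarith
  have h01 : (a b0) 1 + (a b1) 0 = 0 := by
    have := key b0 b1; simp only [inner3] at this
    simp only [b0c.1, b0c.2.1, b0c.2.2, b1c.1, b1c.2.1, b1c.2.2] at this; linarith
  have h02 : (a b0) 2 + (a b2) 0 = 0 := by
    have := key b0 b2; simp only [inner3] at this
    simp only [b0c.1, b0c.2.1, b0c.2.2, b2c.1, b2c.2.1, b2c.2.2] at this; linarith
  have h12 : (a b1) 2 + (a b2) 1 = 0 := by
    have := key b1 b2; simp only [inner3] at this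
    simp only [b1c.1, b1c.2.1, b1c.2.2, b2c.1, b2c.2.1, b2c.2.2] at this; linarith
  rw [hx]
  have hv0 : v 0 = (a b1) 2 := rfl
  have hv1 : v 1 = (a b2) 0 := rfl
  have hv2 : v 2 = (a b0) 1 := rfl
  refine ext3 _ _ ?_ ?_ ?_
  · simp only [cross0, add_apply', smul_apply', hv0, hv1, hv2]
    linear_combination x 0 * h00 + x 1 * h01
  · simp only [cross1, add_apply', smul_apply', hv0, hv1, hv2]
    linear_combination x 1 * h11 + x 2 * h12
  · simp only [cross2, add_apply', smul_apply', hv0, hv1, hv2]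
    linear_combination x 2 * h22 + x 0 * h02

/-! ### The orthogonality lemma -/

abbrev Hsp (k : ℕ) : Type := PiLp 2 (fun _ : Fin k => E3)

def Lmap (k : ℕ) (p : Fin k → E3) : (E3 × (Fin k → ℝ)) →ₗ[ℝ] Hsp k where
  toFun cl := WithLp.toLp 2 (fun j => cl.1 + cl.2 j • p j)
  map_add' a b := by
    refine PiLp.ext fun j => ?_
    show (a.1 + b.1) + (a.2 j + b.2 j) • p j = (a.1 + a.2 j • p j) + (b.1 + b.2 j • p j)
    rw [add_smul]; abel
  map_smul' r a := by
    refine PiLp.ext fun j => ?_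
    show (r • a.1) + (r * a.2 j) • p j = r • (a.1 + a.2 j • p j)
    rw [smul_add, mul_smul]

lemma key_ortho (k : ℕ) (p : Fin k → E3) (w : Fin k → E3)
    (hw : ∀ t : Fin k → E3, (∀ j, (inner ℝ (p j) (t j) : ℝ) = 0) → (∑ j, t j = 0) →
      ∑ j, (inner ℝ (w j) (t j) : ℝ) = 0) :
    ∃ (c : E3) (lam : Fin k → ℝ), ∀ j, w j = c + lam j • p j := by
  set V : Submodule ℝ (Hsp k) := LinearMap.range (Lmap k p) with hV
  have hmem : ∀ u : Hsp k, u ∈ Vᗮ ↔ (∀ j, (inner ℝ (p j) (u j) : ℝ) = 0) ∧ ∑ j, u j = 0 := by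
    intro u
    constructor
    · intro h
      constructor
      · intro j
        have := h (Lmap k p (0, Pi.single j 1)) (LinearMap.mem_range_self _ _)
        rw [PiLp.inner_apply] at this
        have e : ∀ j' : Fin k, (inner ℝ ((Lmap k p (0, Pi.single j 1)) j') (u j') : ℝ)
            = (Pi.single j 1 : Fin k → ℝ) j' * (inner ℝ (p j') (u j') : ℝ) := by
          intro j'
          show (inner ℝ ((0:E3) + (Pi.single j 1 : Fin k → ℝ) j' • p j') (u j') : ℝ) = _
          rw [zero_add, real_inner_smul_left]
        rw [Finset.sum_congr rfl (fun j' _ => e j')] at this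
        simpa [Pi.single_apply, Finset.sum_ite_eq'] using this
      · have h2 : ∀ c : E3, (inner ℝ c (∑ j, u j) : ℝ) = 0 := by
          intro c
          have := h (Lmap k p (c, 0)) (LinearMap.mem_range_self _ _)
          rw [PiLp.inner_apply] at this
          simpa [Lmap, inner_sum] using this
        exact inner_self_eq_zero.mp (h2 (∑ j, u j))
    · rintro ⟨h1, h2⟩ v ⟨⟨c, lam⟩, rfl⟩
      rw [PiLp.inner_apply]
      have : ∀ j, (inner ℝ ((Lmap k p (c, lam)) j) (u j) : ℝ)
          = (inner ℝ c (u j) : ℝ) + lam j * (inner ℝ (p j) (u j) : ℝ) := by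
        intro j
        show (inner ℝ (c + lam j • p j) (u j) : ℝ) = _
        rw [inner_add_left, real_inner_smul_left]
      rw [Finset.sum_congr rfl (fun j _ => this j)]
      simp only [h1, mul_zero, add_zero]
      rw [← inner_sum, h2, inner_zero_right]
  have hwV : (WithLp.toLp 2 w : Hsp k) ∈ Vᗮᗮ := by
    intro v hv
    rw [real_inner_comm, PiLp.inner_apply]
    obtain ⟨h1, h2⟩ := (hmem v).mp hv
    exact hw (WithLp.ofLp v) h1 h2
  rw [Submodule.orthogonal_orthogonal] at hwV
  obtain ⟨⟨c, lam⟩, hc⟩ := hwV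
  exact ⟨c, lam, fun j => congrFun (congrArg WithLp.ofLp hc.symm) j⟩

/-! ### The main theorem -/

/-- The kernel of the skew-symmetric form `ω_p` on the
tangent space `T` at a point `p` of the scheme of polygons coincides with the
tangent space to the `SO(3)ⁿ`-orbit of `p`, namely
`{ (a₁ ∘ p₁, …, a_n ∘ p_n) : aᵢ ∈ 𝔰𝔬₃ }`. -/
theorem kernel_of_symplectic_form_eq_orbit_tangent (n : ℕ) (k : Fin n → ℕ)
    (hk : ∀ i, 3 ≤ k i)
    (ℓ : (i : Fin n) → Fin (k i) → ℝ) (hℓ : ∀ i j, 0 < ℓ i j)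
    (hnd : ∀ i j, 2 * ℓ i j < ∑ j', ℓ i j')
    (p : (i : Fin n) → Fin (k i) → E3)
    (hlen : ∀ i j, ‖p i j‖ = ℓ i j) (hclosed : ∀ i, ∑ j, p i j = 0)
    (T : Set ((i : Fin n) → Fin (k i) → E3))
    (hT : T = {t | (∀ i j, (inner ℝ (p i j) (t i j) : ℝ) = 0) ∧
                   ∀ i, ∑ j, t i j = 0}) :
    {t | t ∈ T ∧ ∀ t' ∈ T,
        ∑ i, ∑ j, det3 (t i j) (t' i j) (p i j) / (ℓ i j) ^ 2 = 0} =
    {t | ∃ a : Fin n → (E3 →ₗ[ℝ] E3), (∀ i, a i ∈ so3) ∧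
          ∀ i j, t i j = (a i) (p i j)} := by
  ext t
  simp only [Set.mem_setOf_eq]
  constructor
  · rintro ⟨htT, hker⟩
    have htT' := htT
    rw [hT, Set.mem_setOf_eq] at htT'
    obtain ⟨hperp, hsum⟩ := htT'
    have hex : ∀ i : Fin n, ∃ c : E3, ∀ j, t i j = cross c (p i j) := by
      intro i
      set w : Fin (k i) → E3 := fun j => (ℓ i j ^ 2)⁻¹ • cross (p i j) (t i j) with hwdef
      have hwkey : ∀ s : Fin (k i) → E3, (∀ j, (inner ℝ (p i j) (s j) : ℝ) = 0) →
          (∑ j, s j = 0) → ∑ j, (inner ℝ (w j) (s j) : ℝ) = 0 := by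
        intro s hs1 hs2
        set t' : (i' : Fin n) → Fin (k i') → E3 := Function.update 0 i s with ht'def
        have ht'i : t' i = s := Function.update_self i s (0 : (i' : Fin n) → Fin (k i') → E3)
        have ht'ne : ∀ i' : Fin n, i' ≠ i → t' i' = 0 := fun i' h =>
          Function.update_of_ne h s (0 : (i' : Fin n) → Fin (k i') → E3)
        have ht'T : t' ∈ T := by
          rw [hT, Set.mem_setOf_eq]
          constructor
          · intro i' j
            by_cases h : i' = i
            · subst h; rw [ht'i]; exact hs1 j
            · rw [ht'ne i' h]; simp
          · intro i'
            by_cases h : i' = i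
            · subst h; rw [ht'i]; exact hs2
            · rw [ht'ne i' h]; simp
        have h0 := hker t' ht'T
        have hz : ∀ i' ∈ Finset.univ, i' ≠ i →
            (∑ j, det3 (t i' j) (t' i' j) (p i' j) / ℓ i' j ^ 2) = 0 := by
          intro i' _ hne
          have hzz : ∀ j, t' i' j = 0 := fun j => by rw [ht'ne i' hne]; rfl
          simp [hzz, det3_zero₂]
        have hcollapse : (∑ i', ∑ j, det3 (t i' j) (t' i' j) (p i' j) / ℓ i' j ^ 2)
            = ∑ j, det3 (t i j) (s j) (p i j) / ℓ i j ^ 2 := by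
          rw [Finset.sum_eq_single_of_mem i (Finset.mem_univ i) hz, ht'i]
        have hterm : ∀ j, (inner ℝ (w j) (s j) : ℝ)
            = det3 (t i j) (s j) (p i j) / ℓ i j ^ 2 := by
          intro j
          show (inner ℝ ((ℓ i j ^ 2)⁻¹ • cross (p i j) (t i j)) (s j) : ℝ) = _
          rw [real_inner_smul_left, ← det3_eq_inner_cross]
          ring
        rw [Finset.sum_congr rfl (fun j _ => hterm j), ← hcollapse]
        exact h0
      obtain ⟨c, lam, hcl⟩ := key_ortho (k i) (p i) w hwkey
      refine ⟨c, fun j => ?_⟩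
      have hwj : w j = (ℓ i j ^ 2)⁻¹ • cross (p i j) (t i j) := rfl
      have h1 : cross (w j) (p i j) = t i j := by
        rw [hwj, cross_smul_left, cross_cross_self]
        have hpp : (inner ℝ (p i j) (p i j) : ℝ) = ℓ i j ^ 2 := by
          rw [real_inner_self_eq_norm_sq, hlen]
        have hpt : (inner ℝ (t i j) (p i j) : ℝ) = 0 := by
          rw [real_inner_comm]; exact hperp i j
        rw [hpp, hpt, zero_smul, sub_zero, smul_smul,
          inv_mul_cancel₀ (pow_ne_zero 2 (hℓ i j).ne'), one_smul]
      have h2 : cross (w j) (p i j) = cross c (p i j) := by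
        rw [hcl j, cross_add_smul_left]
      rw [← h1, h2]
    choose c hc using hex
    exact ⟨fun i => crossLin (c i), fun i => crossLin_mem_so3 (c i),
      fun i j => by rw [hc i j]; rfl⟩
  · rintro ⟨a, haso, hta⟩
    have hv : ∀ i, ∃ v : E3, ∀ x, (a i) x = cross v x := fun i => so3_exists_cross (haso i)
    choose v hvv using hv
    have htv : ∀ i j, t i j = cross (v i) (p i j) := fun i j => by rw [hta i j, hvv]
    have hTmem : (∀ i j, (inner ℝ (p i j) (t i j) : ℝ) = 0) ∧ ∀ i, ∑ j, t i j = 0 := by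
      constructor
      · intro i j
        rw [hta i j]
        have h1 := haso i (p i j) (p i j)
        have h2 : (inner ℝ ((a i) (p i j)) (p i j) : ℝ)
            = (inner ℝ (p i j) ((a i) (p i j)) : ℝ) := real_inner_comm _ _
        linarith
      · intro i
        calc ∑ j, t i j = ∑ j, (a i) (p i j) := Finset.sum_congr rfl fun j _ => hta i j
          _ = (a i) (∑ j, p i j) := (map_sum _ _ _).symm
          _ = 0 := by rw [hclosed i, map_zero]
    refine ⟨by rw [hT]; exact hTmem, ?_⟩
    intro t' ht'
    rw [hT, Set.mem_setOf_eq] at ht'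
    obtain ⟨h1, h2⟩ := ht'
    refine Finset.sum_eq_zero fun i _ => ?_
    have hterm : ∀ j, det3 (t i j) (t' i j) (p i j) / ℓ i j ^ 2
        = (inner ℝ (v i) (t' i j) : ℝ) := by
      intro j
      rw [htv i j, det3_cross_left, real_inner_self_eq_norm_sq, hlen, h1 i j, mul_zero,
        sub_zero, mul_div_cancel_left₀ _ (pow_ne_zero 2 (hℓ i j).ne')]
    rw [Finset.sum_congr rfl (fun j _ => hterm j), ← inner_sum, h2 i, inner_zero_right]
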